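/- Let c : V → V → ℝ be symmetric and satisfy the triangle inequality, let d, a ∈ V be the depots and let (u, v) and (w, s) be two arcs on four pairwise distinct customers. Then every walk from d to a that traverses both arcs (u, v) and (w, s) has cost at least min( c(d,u) + c(u,v) + c(v,w) + c(w,s) + c(s,a), c(d,w) + c(w,s) + c(s,u) + c(u,v) + c(v,a) ). Consequently, if this minimum (the length MinLen({(u,v),(w,s)}) of the shortest d–a path using both arcs) exceeds L, then no single tour of travel cost at most L can use both arcs, i.e. the pair {(u,v),(w,s)} is an edge of the incompatibility graph between arcs. -/
import Mathlib

/-- segment bound: the cost of a walk from index i to index j dominates the direct cost. -/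
lemma seg_bound {V : Type*} (c : V → V → ℝ)
    (htri : ∀ x y z : V, c x z ≤ c x y + c y z) (f : ℕ → V) :
    ∀ i j : ℕ, i < j → c (f i) (f j) ≤ ∑ t ∈ Finset.Ico i j, c (f t) (f (t + 1)) := by
  intro i j hij
  induction j, hij using Nat.le_induction with
  | base => simp
  | succ j hj ih =>
      have h1 : c (f i) (f (j + 1)) ≤ c (f i) (f j) + c (f j) (f (j + 1)) := htri _ _ _
      have h2 : ∑ t ∈ Finset.Ico i (j + 1), c (f t) (f (t + 1)) =
          (∑ t ∈ Finset.Ico i j, c (f t) (f (t + 1))) + c (f j) (f (j + 1)) := by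
        rw [Finset.sum_Ico_succ_top (le_of_lt hj)]
      linarith

/- STATEMENT 4: every d–a walk traversing two arcs (u,v) and (w,s) on four pairwise
   distinct customers costs at least
   MinLen({(u,v),(w,s)}) = min (c d u + c u v + c v w + c w s + c s a)
                               (c d w + c w s + c s u + c u v + c v a);
   hence if this exceeds L, the two arcs are incompatible. -/
theorem stmt_4 {V : Type*} (c : V → V → ℝ)
    (hsym : ∀ x y : V, c x y = c y x)
    (htri : ∀ x y z : V, c x z ≤ c x y + c y z)
    (d a u v w s : V)
    (hdist : u ≠ v ∧ u ≠ w ∧ u ≠ s ∧ v ≠ w ∧ v ≠ s ∧ w ≠ s)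
    (hcust : u ≠ d ∧ u ≠ a ∧ v ≠ d ∧ v ≠ a ∧ w ≠ d ∧ w ≠ a ∧ s ≠ d ∧ s ≠ a)
    (L : ℝ) (k : ℕ) (f : ℕ → V) (hd : f 0 = d) (ha : f k = a)
    (h1 : ∃ t, t + 1 ≤ k ∧ f t = u ∧ f (t + 1) = v)
    (h2 : ∃ t, t + 1 ≤ k ∧ f t = w ∧ f (t + 1) = s) :
    (min (c d u + c u v + c v w + c w s + c s a)
         (c d w + c w s + c s u + c u v + c v a) ≤
        ∑ t ∈ Finset.range k, c (f t) (f (t + 1))) ∧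
      (L < min (c d u + c u v + c v w + c w s + c s a)
               (c d w + c w s + c s u + c u v + c v a) →
        ¬ (∑ t ∈ Finset.range k, c (f t) (f (t + 1)) ≤ L)) := by
  obtain ⟨p, hpk, hpu, hpv⟩ := h1
  obtain ⟨q, hqk, hqw, hqs⟩ := h2
  obtain ⟨huv, huw, hus, hvw, hvs, hws⟩ := hdist
  obtain ⟨hud, hua, hvd, hva, hwd, hwa, hsd, hsa⟩ := hcust
  -- abbreviation for the main inequality
  have key : min (c d u + c u v + c v w + c w s + c s a)
      (c d w + c w s + c s u + c u v + c v a) ≤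
      ∑ t ∈ Finset.range k, c (f t) (f (t + 1)) := by
    have hpq : p ≠ q := fun h => huw (hpu ▸ hqw ▸ (by rw [h]))
    -- core argument for ordered positions p' < q' with vertices (x,y) then (z,r)
    have core : ∀ (p' q' : ℕ) (x y z r : V),
        p' + 1 ≤ k → q' + 1 ≤ k → f p' = x → f (p' + 1) = y → f q' = z → f (q' + 1) = r →
        p' + 1 < q' + 1 → y ≠ z → x ≠ d → r ≠ a →
        c d x + c x y + c y z + c z r + c r a ≤ ∑ t ∈ Finset.range k, c (f t) (f (t + 1)) := by
      intro p' q' x y z r hp'k hq'k hx hy hz hr hlt hyz hxd hra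
      have hp'q' : p' + 1 < q' := by
        rcases lt_or_eq_of_le (Nat.lt_succ_iff.mp hlt) with h | h
        · exact h
        · exact absurd (by rw [← hy, h, hz]) hyz
      have h0p : 0 < p' := by
        rcases Nat.eq_zero_or_pos p' with h | h
        · exact absurd (by rw [← hx, h, hd] : x = d) hxd
        · exact h
      have hq1k : q' + 1 < k := by
        rcases lt_or_eq_of_le hq'k with h | h
        · exact h
        · exact absurd (by rw [← hr, h, ha] : r = a) hra
      have s1 : c d x ≤ ∑ t ∈ Finset.Ico 0 p', c (f t) (f (t + 1)) := by
        have := seg_bound c htri f 0 p' h0p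
        rwa [hd, hx] at this
      have s2 : c y z ≤ ∑ t ∈ Finset.Ico (p' + 1) q', c (f t) (f (t + 1)) := by
        have := seg_bound c htri f (p' + 1) q' hp'q'
        rwa [hy, hz] at this
      have s3 : c r a ≤ ∑ t ∈ Finset.Ico (q' + 1) k, c (f t) (f (t + 1)) := by
        have := seg_bound c htri f (q' + 1) k hq1k
        rwa [hr, ha] at this
      have split : ∑ t ∈ Finset.range k, c (f t) (f (t + 1)) =
          (∑ t ∈ Finset.Ico 0 p', c (f t) (f (t + 1))) + c x y +
          (∑ t ∈ Finset.Ico (p' + 1) q', c (f t) (f (t + 1))) + c z r +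
          (∑ t ∈ Finset.Ico (q' + 1) k, c (f t) (f (t + 1))) := by
        rw [Finset.range_eq_Ico]
        rw [← Finset.sum_Ico_consecutive _ (Nat.zero_le (q' + 1)) (le_of_lt hq1k)]
        rw [← Finset.sum_Ico_consecutive _ (Nat.zero_le q') (Nat.le_succ q')]
        rw [← Finset.sum_Ico_consecutive _ (Nat.zero_le (p' + 1)) (le_of_lt hp'q')]
        rw [← Finset.sum_Ico_consecutive _ (Nat.zero_le p') (Nat.le_succ p')]
        have e1 : ∑ t ∈ Finset.Ico p' (p' + 1), c (f t) (f (t + 1)) = c x y := by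
          simp [hx, hy]
        have e2 : ∑ t ∈ Finset.Ico q' (q' + 1), c (f t) (f (t + 1)) = c z r := by
          simp [hz, hr]
        rw [e1, e2]
      rw [split]; linarith
    rcases lt_or_gt_of_ne hpq with h | h
    · have hle : c d u + c u v + c v w + c w s + c s a ≤
          ∑ t ∈ Finset.range k, c (f t) (f (t + 1)) :=
        core p q u v w s hpk hqk hpu hpv hqw hqs (by omega) hvw hud hsa
      exact le_trans (min_le_left _ _) hle
    · have hle : c d w + c w s + c s u + c u v + c v a ≤
          ∑ t ∈ Finset.range k, c (f t) (f (t + 1)) :=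
        core q p w s u v hqk hpk hqw hqs hpu hpv (by omega) (Ne.symm hus) hwd hva
      exact le_trans (min_le_right _ _) hle
  exact ⟨key, fun hL hle => absurd (le_trans key hle) (not_le.mpr hL)⟩
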